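/- arXiv:1102.2414 — 2 statements merged into one kernel-verified Lean document; each statement's English description precedes it below -/
import Mathlib

section
/- Let A and X be n×n complex matrices and 1 ≤ m ≤ n. Then D^m per(A)(X,…,X) = m! · Σ_{J∈Q_{m,n}} per A(J; X,…,X), i.e., m! times the sum over all strictly increasing m-tuples J of column indices of the permanent of the matrix obtained from A by replacing, for each index j in J, the j-th column of A by the j-th column of X. -/
/-!
Viewed as a function of its columns, the permanent is a continuous multilinear map, so its
`m`-th derivative at `A` in direction `(X, …, X)` is the sum, over all injections `e` of
`{1, …, m}` into the column indices, of the permanent of `A` with the columns in the range of `e`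
replaced by those of `X`. That matrix only depends on the range of `e`, and every injection
factors uniquely as a permutation of `{1, …, m}` followed by a strictly increasing map, so each
`J ∈ Q_{m,n}` is counted `m!` times.
-/

open scoped Classical

noncomputable section

open scoped Matrix.Norms.L2Operator

/-- The permanent of a square complex matrix:
`per A = Σ_σ a_{1σ(1)} ⋯ a_{nσ(n)}`. -/
def perm {k : ℕ} (A : Matrix (Fin k) (Fin k) ℂ) : ℂ :=
  ∑ σ : Equiv.Perm (Fin k), ∏ i, A i (σ i)

/-- `A(J; X¹,…,Xᵐ)` : the matrix obtained from `A` by replacing, for each `p`,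
column `J p` of `A` by column `J p` of `X p`, keeping all other columns unchanged. -/
def replCols {n m : ℕ} (A : Matrix (Fin n) (Fin n) ℂ) (J : Fin m → Fin n)
    (X : Fin m → Matrix (Fin n) (Fin n) ℂ) : Matrix (Fin n) (Fin n) ℂ :=
  Matrix.of fun i j => if h : ∃ p, J p = j then X h.choose i j else A i j

theorem ContinuousMultilinearMap.iteratedFDeriv_apply_const {𝕜 ι G : Type*}
    [NontriviallyNormedField 𝕜] [Fintype ι] {E : ι → Type*} [∀ i, NormedAddCommGroup (E i)]
    [∀ i, NormedSpace 𝕜 (E i)] [NormedAddCommGroup G] [NormedSpace 𝕜 G]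
    (f : ContinuousMultilinearMap 𝕜 E G) (m : ℕ) (x y : ∀ i, E i) :
    iteratedFDeriv 𝕜 m f x (fun _ => y) =
      ∑ e : Fin m ↪ ι, f fun i => if i ∈ Set.range e then y i else x i := by
  simp only [f.iteratedFDeriv_eq, ContinuousMultilinearMap.iteratedFDeriv, sum_apply,
    ContinuousMultilinearMap.iteratedFDerivComponent_apply, Pi.compRightL_apply, dite_eq_ite]

section StrictMonoFactorization

variable {α : Type*} [LinearOrder α]

theorem Fin.bijective_perm_trans_strictMono (m : ℕ) :
    Function.Bijective fun p : Equiv.Perm (Fin m) × {J : Fin m → α // StrictMono J} =>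
      (p.1.toEmbedding.trans ⟨p.2.1, p.2.2.injective⟩ : Fin m ↪ α) := by
  refine ⟨?_, fun e => ?_⟩
  · rintro ⟨π, J, hJ⟩ ⟨π', J', hJ'⟩ h
    have hcomp : J ∘ π = J' ∘ π' := congrArg DFunLike.coe h
    have hJJ' : J = J' := (hJ.range_inj hJ').1 <| by
      simpa only [Set.range_comp, π.range_eq_univ, π'.range_eq_univ, Set.image_univ]
        using congrArg Set.range hcomp
    subst hJJ'
    rw [Equiv.ext fun i => hJ.injective (congrFun hcomp i)]
  · let J := (Finset.univ.map e).orderEmbOfFin (k := m) (by simp)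
    have hrange : Set.range e = Set.range J := by simp [J]
    let π := (Equiv.ofInjective e e.injective).trans
      ((Equiv.setCongr hrange).trans (Equiv.ofInjective J J.injective).symm)
    refine ⟨(π, ⟨J, J.strictMono⟩), Function.Embedding.ext fun i => ?_⟩
    simp [π, Equiv.apply_ofInjective_symm]

theorem Fintype.sum_embedding_eq_factorial_smul_sum_strictMono {M : Type*} [Fintype α]
    [AddCommMonoid M] (m : ℕ) (g : (Fin m → α) → M)
    (hg : ∀ (J : Fin m → α) (π : Equiv.Perm (Fin m)), g (J ∘ π) = g J) :
    ∑ e : Fin m ↪ α, g e = m.factorial • ∑ J : {J : Fin m → α // StrictMono J}, g J := by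
  rw [← Fintype.sum_bijective _ (Fin.bijective_perm_trans_strictMono m)
    (fun p => g p.2.1) _ fun p => (hg p.2.1 p.1).symm]
  simp only [Fintype.sum_prod_type, Finset.sum_const, Finset.card_univ, Fintype.card_perm,
    Fintype.card_fin]

end StrictMonoFactorization

theorem replCols_const {n m : ℕ} (A X : Matrix (Fin n) (Fin n) ℂ) (J : Fin m → Fin n) :
    replCols A J (fun _ => X) = Matrix.of fun i j => if j ∈ Set.range J then X i j else A i j := by
  ext i j
  simp only [replCols, Matrix.of_apply, dite_eq_ite, Set.mem_range]

theorem replCols_comp_perm {n m : ℕ} (A X : Matrix (Fin n) (Fin n) ℂ) (J : Fin m → Fin n)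
    (π : Equiv.Perm (Fin m)) : replCols A (J ∘ π) (fun _ => X) = replCols A J fun _ => X := by
  simp only [replCols_const, EquivLike.range_comp]

def Matrix.permanentMultilinear (𝕜 ι : Type*) [NontriviallyNormedField 𝕜] [Fintype ι]
    [DecidableEq ι] : ContinuousMultilinearMap 𝕜 (fun _ : ι => ι → 𝕜) 𝕜 :=
  ∑ σ : Equiv.Perm ι,
    (ContinuousMultilinearMap.mkPiAlgebra 𝕜 ι 𝕜).compContinuousLinearMap
      fun j => ContinuousLinearMap.proj (σ j)

theorem Matrix.permanentMultilinear_apply {𝕜 ι : Type*} [NontriviallyNormedField 𝕜] [Fintype ι]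
    [DecidableEq ι] (v : ι → ι → 𝕜) :
    permanentMultilinear 𝕜 ι v = (Matrix.of fun i j => v j i).permanent := by
  simp [permanentMultilinear, Matrix.permanent]

/-- The transpose, landing in the columns with their product norm rather than in matrices with
the operator norm. -/
def transposeCLM (n : ℕ) : Matrix (Fin n) (Fin n) ℂ →L[ℂ] (Fin n → Fin n → ℂ) :=
  LinearMap.toContinuousLinearMap
    { toFun := fun B j i => B i j
      map_add' := fun _ _ => rfl
      map_smul' := fun _ _ => rfl }

theorem transposeCLM_apply {n : ℕ} (B : Matrix (Fin n) (Fin n) ℂ) (i j : Fin n) :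
    transposeCLM n B j i = B i j :=
  rfl

theorem perm_eq_permanent {n : ℕ} (B : Matrix (Fin n) (Fin n) ℂ) : perm B = B.permanent := by
  rw [← Matrix.permanent_transpose]
  rfl

theorem perm_eq_permanentMultilinear_transposeCLM {n : ℕ} (B : Matrix (Fin n) (Fin n) ℂ) :
    perm B = Matrix.permanentMultilinear ℂ (Fin n) (transposeCLM n B) := by
  rw [perm_eq_permanent, Matrix.permanentMultilinear_apply]
  rfl

theorem iteratedFDeriv_perm_apply_const_eq_sum_embedding {n : ℕ} (m : ℕ)
    (A X : Matrix (Fin n) (Fin n) ℂ) :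
    iteratedFDeriv ℂ m perm A (fun _ => X) =
      ∑ e : Fin m ↪ Fin n, perm (replCols A e fun _ => X) := by
  have hperm : (perm : Matrix (Fin n) (Fin n) ℂ → ℂ) =
      Matrix.permanentMultilinear ℂ (Fin n) ∘ transposeCLM n :=
    funext perm_eq_permanentMultilinear_transposeCLM
  rw [hperm, (transposeCLM n).iteratedFDeriv_comp_right
    (Matrix.permanentMultilinear ℂ (Fin n)).contDiff A le_top]
  simp only [ContinuousMultilinearMap.compContinuousLinearMap_apply,
    ContinuousMultilinearMap.iteratedFDeriv_apply_const, replCols_const, Function.comp_apply]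
  congr! with e - j
  ext i
  simp only [transposeCLM_apply, Matrix.of_apply]
  split_ifs <;> rfl

theorem iteratedFDeriv_perm_apply_const_eq_sum_replCols_general (n m : ℕ)
    (A X : Matrix (Fin n) (Fin n) ℂ) :
    iteratedFDeriv ℂ m perm A (fun _ => X) =
      (m.factorial : ℂ) * ∑ J : {J : Fin m → Fin n // StrictMono J},
        perm (replCols A J.1 fun _ => X) := by
  rw [iteratedFDeriv_perm_apply_const_eq_sum_embedding,
    Fintype.sum_embedding_eq_factorial_smul_sum_strictMono m (fun J => perm (replCols A J _))
      fun J π => by rw [replCols_comp_perm], nsmul_eq_mul]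

/-- for `1 ≤ m ≤ n`,
`D^m per(A)(X,…,X) = m! Σ_{J ∈ Q_{m,n}} per A(J; X,…,X)`. -/
theorem iteratedFDeriv_perm_apply_const_eq_sum_replCols (n m : ℕ) (hm : 1 ≤ m) (hmn : m ≤ n)
    (A X : Matrix (Fin n) (Fin n) ℂ) :
    iteratedFDeriv ℂ m perm A (fun _ => X) =
      (m.factorial : ℂ) * ∑ J : {J : Fin m → Fin n // StrictMono J},
        perm (replCols A J.1 fun _ => X) :=
  iteratedFDeriv_perm_apply_const_eq_sum_replCols_general n m A X
end
end

section
/- Let A, X^1, …, X^m be n×n complex matrices with 1 ≤ m ≤ n. Then D^m per(A)(X^1,…,X^m) = m! · Σ_{I,J∈Q_{m,n}} per A(I|J) · Δ_p(X^1[I|J], …, X^m[I|J]). -/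
open scoped Classical

noncomputable section

open scoped Matrix.Norms.L2Operator

/-- The strictly increasing enumeration of the complement of the range of an
injective tuple `I : Fin m → Fin n`; used to form `A(I|J)`, the submatrix of `A`
obtained by deleting rows `I` and columns `J`. -/
def delTuple {n m : ℕ} (I : Fin m → Fin n) (hI : Function.Injective I) : Fin (n - m) → Fin n :=
  (Finset.univ.image I)ᶜ.orderEmbOfFin
    (by simp [Finset.card_compl, Finset.card_image_of_injective _ hI])

/-- The mixed permanent `Δ_p(T¹,…,Tᵐ) = (1/m!) Σ_{σ ∈ S_m} per [T^{σ(1)}_{[1]},…,T^{σ(m)}_{[m]}]`,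
the `j`-th column of the matrix inside the permanent being the `j`-th column of `T^{σ(j)}`. -/
def mixedPerm {m : ℕ} (T : Fin m → Matrix (Fin m) (Fin m) ℂ) : ℂ :=
  (m.factorial : ℂ)⁻¹ * ∑ σ : Equiv.Perm (Fin m), perm (Matrix.of fun i j => T (σ j) i j)

/-!
The permanent is multilinear in the rows, so by Mathlib's formula for the iterated derivative of
a multilinear map, `D^m per(A)(X¹,…,Xᵐ)` is the sum, over all injective `e : Fin m → Fin n`, of the
permanent of `A` with row `e p` replaced by row `e p` of `Xᵖ`. Write `e = I ∘ σ⁻¹` with `I`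
increasing and, for fixed `I`, split each permutation `f` of `Fin n` as `f ∘ I = J ∘ ρ` with `J`
increasing, together with the permutation `β` by which `f` maps the rows outside `I` onto the
columns outside `J`. The term of `(e, f)` then factors into the `β`-term of `per A(I|J)` times
`∏_q (X^{σ q})_{I q, J (ρ q)}`, and summing the latter over `σ` and `ρ` gives
`m! Δ_p(X¹[I|J],…,Xᵐ[I|J])`.
-/

open Equiv Finset

def permMultilinear (n : ℕ) : ContinuousMultilinearMap ℂ (fun _ : Fin n => Fin n → ℂ) ℂ :=
  ∑ σ : Perm (Fin n), (ContinuousMultilinearMap.mkPiAlgebra ℂ (Fin n) ℂ).compContinuousLinearMap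
    fun i => ContinuousLinearMap.proj (σ i)

lemma permMultilinear_apply {n : ℕ} (v : Fin n → Fin n → ℂ) :
    permMultilinear n v = perm (Matrix.of v) := by
  simp [permMultilinear, perm]

section ReplRows

variable {n m : ℕ}

def replRows (A : Matrix (Fin n) (Fin n) ℂ) (e : Fin m ↪ Fin n)
    (X : Fin m → Matrix (Fin n) (Fin n) ℂ) : Matrix (Fin n) (Fin n) ℂ :=
  Matrix.of fun i => if h : i ∈ Set.range e then X (e.toEquivRange.symm ⟨i, h⟩) i else A i

lemma replRows_apply_of_eq (A : Matrix (Fin n) (Fin n) ℂ) {e : Fin m ↪ Fin n}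
    (X : Fin m → Matrix (Fin n) (Fin n) ℂ) {p : Fin m} {i : Fin n} (h : e p = i) :
    replRows A e X i = X p i := by
  subst h
  exact (dif_pos (Set.mem_range_self p)).trans (by simp)

lemma replRows_apply_of_notMem (A : Matrix (Fin n) (Fin n) ℂ) {e : Fin m ↪ Fin n}
    (X : Fin m → Matrix (Fin n) (Fin n) ℂ) {i : Fin n} (hi : i ∉ Set.range e) :
    replRows A e X i = A i :=
  dif_neg hi

theorem iteratedFDeriv_perm_apply (A : Matrix (Fin n) (Fin n) ℂ)
    (X : Fin m → Matrix (Fin n) (Fin n) ℂ) :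
    iteratedFDeriv ℂ m perm A X = ∑ e : Fin m ↪ Fin n, perm (replRows A e X) := by
  let rows : Matrix (Fin n) (Fin n) ℂ →L[ℂ] (Fin n → Fin n → ℂ) :=
    LinearMap.toContinuousLinearMap (Matrix.ofLinearEquiv ℂ).symm.toLinearMap
  have hperm : perm = permMultilinear n ∘ rows := funext fun B => (permMultilinear_apply B).symm
  conv_lhs => rw [hperm]
  rw [rows.iteratedFDeriv_comp_right (permMultilinear n).contDiff A le_top,
    ContinuousMultilinearMap.compContinuousLinearMap_apply,
    (permMultilinear n).iteratedFDeriv_eq, ContinuousMultilinearMap.iteratedFDeriv]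
  simp only [_root_.sum_apply,
    ContinuousMultilinearMap.iteratedFDerivComponent_apply, permMultilinear_apply]
  refine sum_congr rfl fun e _ => congrArg perm ?_
  ext i j
  simp only [replRows, Matrix.of_apply]
  split_ifs
  · -- the two sides use different `DecidableEq (Fin n)` instances in `toEquivRange`
    exact congrArg (fun p => X p i j) (by congr; apply Subsingleton.elim)
  · rfl

end ReplRows

section Sorting

variable {m : ℕ} {β : Type*} [LinearOrder β]

lemma StrictMono.perm_eq_one_of_comp {I : Fin m → β} (hI : StrictMono I) {σ : Perm (Fin m)}
    (hIσ : StrictMono (I ∘ σ)) : σ = 1 :=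
  σ.monotone_iff.1 fun _ _ hab => hI.le_iff_le.1 (hIσ.monotone hab)

variable (m β) in
def strictMonoPermEquivEmbedding :
    {I : Fin m → β // StrictMono I} × Perm (Fin m) ≃ (Fin m ↪ β) where
  toFun p := ⟨p.1.1 ∘ p.2.symm, p.1.2.injective.comp p.2.symm.injective⟩
  invFun e := (⟨e ∘ Tuple.sort e, (Tuple.monotone_sort e).strictMono_of_injective
    (e.injective.comp (Tuple.sort e).injective)⟩, Tuple.sort e)
  left_inv := by
    rintro ⟨⟨I, hI⟩, σ⟩
    have hinj : Function.Injective (I ∘ σ.symm) := hI.injective.comp σ.symm.injective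
    have hsort : σ⁻¹ * Tuple.sort (I ∘ σ.symm) = 1 :=
      hI.perm_eq_one_of_comp <| (Tuple.monotone_sort _).strictMono_of_injective
        (hinj.comp (Tuple.sort _).injective)
    have hσ : Tuple.sort (I ∘ σ.symm) = σ := (inv_mul_eq_one.1 hsort).symm
    ext i <;> simp [hσ]
  right_inv e := by ext; simp

@[simp] lemma strictMonoPermEquivEmbedding_apply (I : {I : Fin m → β // StrictMono I})
    (σ : Perm (Fin m)) (q : Fin m) :
    strictMonoPermEquivEmbedding m β (I, σ) q = I.1 (σ.symm q) :=
  rfl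

lemma StrictMono.eq_and_eq_of_comp_perm_eq {I J : Fin m → β} (hI : StrictMono I)
    (hJ : StrictMono J) {σ τ : Perm (Fin m)} (h : ∀ q, I (σ q) = J (τ q)) : I = J ∧ σ = τ := by
  have key := (strictMonoPermEquivEmbedding m β).injective (a₁ := (⟨I, hI⟩, σ.symm))
    (a₂ := (⟨J, hJ⟩, τ.symm)) (DFunLike.ext _ _ fun q => by simpa using h q)
  simp only [Prod.mk.injEq, Subtype.mk.injEq, Equiv.symm_bijective.injective.eq_iff] at key
  exact key

lemma card_strictMono_mul_factorial [Fintype β] :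
    Fintype.card {I : Fin m → β // StrictMono I} * m.factorial =
      (Fintype.card β).descFactorial m := by
  simpa [Fintype.card_perm, Fintype.card_embedding_eq] using
    Fintype.card_congr (strictMonoPermEquivEmbedding m β)

end Sorting

section Complement

variable {n m : ℕ}

lemma delTuple_ne (I : Fin m → Fin n) (hI : Function.Injective I) (q : Fin m)
    (r : Fin (n - m)) : I q ≠ delTuple I hI r := fun h =>
  mem_compl.1 (orderEmbOfFin_mem _ _ r) (h ▸ mem_image_of_mem I (mem_univ q))

lemma delTuple_injective (I : Fin m → Fin n) (hI : Function.Injective I) :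
    Function.Injective (delTuple I hI) :=
  (orderEmbOfFin _ _).injective

def sumDelTupleEquiv (I : Fin m → Fin n) (hI : Function.Injective I) :
    Fin m ⊕ Fin (n - m) ≃ Fin n :=
  Equiv.ofBijective (Sum.elim I (delTuple I hI)) <|
    (Fintype.bijective_iff_injective_and_card _).2
      ⟨hI.sumElim (delTuple_injective I hI) (delTuple_ne I hI),
        by simp [Nat.add_sub_cancel' (Fin.le_of_injective I hI)]⟩

lemma sumDelTupleEquiv_symm_apply_left (I : Fin m → Fin n) (hI : Function.Injective I)
    (q : Fin m) : (sumDelTupleEquiv I hI).symm (I q) = Sum.inl q :=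
  (Equiv.symm_apply_eq _).2 rfl

lemma sumDelTupleEquiv_symm_apply_right (I : Fin m → Fin n) (hI : Function.Injective I)
    (r : Fin (n - m)) : (sumDelTupleEquiv I hI).symm (delTuple I hI r) = Sum.inr r :=
  (Equiv.symm_apply_eq _).2 rfl

def joinPerm (I J : {I : Fin m → Fin n // StrictMono I}) (ρ : Perm (Fin m))
    (β : Perm (Fin (n - m))) : Perm (Fin n) :=
  (sumDelTupleEquiv I.1 I.2.injective).symm.trans
    ((Equiv.sumCongr ρ β).trans (sumDelTupleEquiv J.1 J.2.injective))

variable (I J : {I : Fin m → Fin n // StrictMono I}) (ρ : Perm (Fin m)) (β : Perm (Fin (n - m)))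

lemma joinPerm_apply_left (q : Fin m) : joinPerm I J ρ β (I.1 q) = J.1 (ρ q) := by
  simp only [joinPerm, Equiv.trans_apply, sumDelTupleEquiv_symm_apply_left, sumCongr_apply,
    Sum.map_inl]
  rfl

lemma joinPerm_apply_right (r : Fin (n - m)) :
    joinPerm I J ρ β (delTuple I.1 I.2.injective r) = delTuple J.1 J.2.injective (β r) := by
  simp only [joinPerm, Equiv.trans_apply, sumDelTupleEquiv_symm_apply_right, sumCongr_apply,
    Sum.map_inr]
  rfl

lemma joinPerm_injective (I : {I : Fin m → Fin n // StrictMono I}) :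
    Function.Injective fun t : {J : Fin m → Fin n // StrictMono J} × Perm (Fin m) ×
      Perm (Fin (n - m)) => joinPerm I t.1 t.2.1 t.2.2 := by
  rintro ⟨J, ρ, β⟩ ⟨J', ρ', β'⟩ h
  have hleft (q : Fin m) : J.1 (ρ q) = J'.1 (ρ' q) := by
    simpa only [joinPerm_apply_left] using DFunLike.congr_fun h (I.1 q)
  obtain ⟨hJ, rfl⟩ := J.2.eq_and_eq_of_comp_perm_eq J'.2 hleft
  obtain rfl : J = J' := Subtype.ext hJ
  have hβ : β = β' := Equiv.ext fun r => delTuple_injective _ _ <| by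
    simpa only [joinPerm_apply_right] using DFunLike.congr_fun h (delTuple I.1 I.2.injective r)
  rw [hβ]

lemma joinPerm_bijective (I : {I : Fin m → Fin n // StrictMono I}) :
    Function.Bijective fun t : {J : Fin m → Fin n // StrictMono J} × Perm (Fin m) ×
      Perm (Fin (n - m)) => joinPerm I t.1 t.2.1 t.2.2 := by
  refine (Fintype.bijective_iff_injective_and_card _).2 ⟨joinPerm_injective I, ?_⟩
  have hcard := card_strictMono_mul_factorial (m := m) (β := Fin n)
  rw [Fintype.card_fin] at hcard
  simp only [Fintype.card_prod, Fintype.card_perm, Fintype.card_fin, ← mul_assoc, hcard]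
  rw [mul_comm, Nat.factorial_mul_descFactorial (Fin.le_of_injective _ I.2.injective)]

lemma sum_perm_eq_sum_joinPerm {M : Type*} [AddCommMonoid M]
    (I : {I : Fin m → Fin n // StrictMono I}) (G : Perm (Fin n) → M) :
    ∑ f, G f = ∑ J : {J : Fin m → Fin n // StrictMono J}, ∑ ρ, ∑ β, G (joinPerm I J ρ β) := by
  rw [← (joinPerm_bijective I).sum_comp]
  simp only [Fintype.sum_prod_type]

end Complement

lemma factorial_mul_mixedPerm {m : ℕ} (T : Fin m → Matrix (Fin m) (Fin m) ℂ) :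
    (m.factorial : ℂ) * mixedPerm T =
      ∑ τ : Perm (Fin m), ∑ ρ : Perm (Fin m), ∏ i, T (τ i) i (ρ i) := by
  rw [mixedPerm, mul_inv_cancel_left₀ (Nat.cast_ne_zero.2 m.factorial_ne_zero)]
  simp only [perm, Matrix.of_apply]
  rw [sum_comm]
  conv_rhs => rw [sum_comm]
  exact sum_congr rfl fun ρ _ => Fintype.sum_equiv (Equiv.mulRight ρ) _ _ fun _ => rfl

section RowSet

variable {n m : ℕ} (A : Matrix (Fin n) (Fin n) ℂ) (X : Fin m → Matrix (Fin n) (Fin n) ℂ)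
  (I : {I : Fin m → Fin n // StrictMono I})

lemma prod_replRows_joinPerm (J : {J : Fin m → Fin n // StrictMono J}) (σ ρ : Perm (Fin m))
    (β : Perm (Fin (n - m))) :
    ∏ i, replRows A (strictMonoPermEquivEmbedding m (Fin n) (I, σ)) X i (joinPerm I J ρ β i) =
      (∏ q, X (σ q) (I.1 q) (J.1 (ρ q))) *
        ∏ r, A (delTuple I.1 I.2.injective r) (delTuple J.1 J.2.injective (β r)) := by
  rw [← (sumDelTupleEquiv I.1 I.2.injective).prod_comp, Fintype.prod_sum_type]
  congr 1
  · refine prod_congr rfl fun q _ => ?_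
    change replRows _ _ X (I.1 q) (joinPerm I J ρ β (I.1 q)) = _
    rw [joinPerm_apply_left, replRows_apply_of_eq A X (p := σ q) (by simp)]
  · refine prod_congr rfl fun r _ => ?_
    change replRows _ _ X (delTuple I.1 I.2.injective r)
      (joinPerm I J ρ β (delTuple I.1 I.2.injective r)) = _
    rw [joinPerm_apply_right, replRows_apply_of_notMem]
    rintro ⟨p, hp⟩
    exact delTuple_ne I.1 I.2.injective (σ.symm p) r hp

lemma sum_perm_replRows :
    ∑ σ, perm (replRows A (strictMonoPermEquivEmbedding m (Fin n) (I, σ)) X) =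
      ∑ J : {J : Fin m → Fin n // StrictMono J},
        perm (A.submatrix (delTuple I.1 I.2.injective) (delTuple J.1 J.2.injective)) *
          ((m.factorial : ℂ) * mixedPerm fun p => (X p).submatrix I.1 J.1) := by
  simp only [factorial_mul_mixedPerm, perm, sum_perm_eq_sum_joinPerm I, prod_replRows_joinPerm,
    Matrix.submatrix_apply]
  rw [sum_comm]
  refine sum_congr rfl fun J _ => ?_
  rw [mul_comm, sum_mul]
  refine sum_congr rfl fun σ _ => ?_
  rw [sum_mul]
  refine sum_congr rfl fun ρ _ => ?_
  rw [mul_sum]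

end RowSet

theorem iteratedFDeriv_perm_eq_sum_mixedPerm_general (n m : ℕ)
    (A : Matrix (Fin n) (Fin n) ℂ) (X : Fin m → Matrix (Fin n) (Fin n) ℂ) :
    iteratedFDeriv ℂ m perm A X =
      (m.factorial : ℂ) * ∑ I : {I : Fin m → Fin n // StrictMono I},
        ∑ J : {J : Fin m → Fin n // StrictMono J},
          perm (A.submatrix (delTuple I.1 I.2.injective) (delTuple J.1 J.2.injective)) *
            mixedPerm (fun p => (X p).submatrix I.1 J.1) := by
  rw [iteratedFDeriv_perm_apply, ← (strictMonoPermEquivEmbedding m (Fin n)).sum_comp,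
    Fintype.sum_prod_type, mul_sum]
  refine sum_congr rfl fun I _ => ?_
  rw [sum_perm_replRows, mul_sum]
  simp only [mul_left_comm]

/-- for `1 ≤ m ≤ n`,
`D^m per(A)(X¹,…,Xᵐ) = m! Σ_{I,J ∈ Q_{m,n}} per A(I|J) ⬝ Δ_p(X¹[I|J],…,Xᵐ[I|J])`. -/
theorem iteratedFDeriv_perm_eq_sum_mixedPerm (n m : ℕ) (hm : 1 ≤ m) (hmn : m ≤ n)
    (A : Matrix (Fin n) (Fin n) ℂ) (X : Fin m → Matrix (Fin n) (Fin n) ℂ) :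
    iteratedFDeriv ℂ m perm A X =
      (m.factorial : ℂ) * ∑ I : {I : Fin m → Fin n // StrictMono I},
        ∑ J : {J : Fin m → Fin n // StrictMono J},
          perm (A.submatrix (delTuple I.1 I.2.injective) (delTuple J.1 J.2.injective)) *
            mixedPerm (fun p => (X p).submatrix I.1 J.1) :=
  iteratedFDeriv_perm_eq_sum_mixedPerm_general n m A X
end
end
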